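/- Let σ, τ ∈ SO(3) be the rotations with matrices (1/5)[[3,−4,0],[4,3,0],[0,0,5]] and (1/5)[[5,0,0],[0,3,−4],[0,4,3]]. For every nontrivial reduced word ω of length n in {σ,σ⁻¹,τ,τ⁻¹} whose rightmost letter is σ or σ⁻¹, the vector ω(1,0,0) has the form (a,b,c)/5ⁿ with a, b, c ∈ ℤ and 5 ∤ b. -/

import Mathlib

/-!
Clearing denominators, `5ⁿ ω(1,0,0)` is the integer vector obtained by applying the integer
matrices `5σ^{±1}`, `5τ^{±1}` to `(1,0,0)`. Modulo 5 each of these matrices has rank one, and it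
maps the image line of every letter other than its own inverse isomorphically onto its own image
line. Hence, for a reduced word ending in `σ^{±1}`, induction from the right shows that
`5ⁿ ω(1,0,0)` is, modulo 5, a nonzero multiple of the generator of the image line of the leftmost
letter, and the middle entry of each such generator is nonzero.
-/

open Pointwise

/-- Rotation about the z-axis by `arccos (3/5)`. -/
noncomputable def sigmaRot : Matrix (Fin 3) (Fin 3) ℝ :=
  !![3/5, -4/5, 0; 4/5, 3/5, 0; 0, 0, 1]

/-- The inverse (transpose) of `sigmaRot`. -/
noncomputable def sigmaRotInv : Matrix (Fin 3) (Fin 3) ℝ :=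
  !![3/5, 4/5, 0; -4/5, 3/5, 0; 0, 0, 1]

/-- Rotation about the x-axis by `arccos (3/5)`. -/
noncomputable def tauRot : Matrix (Fin 3) (Fin 3) ℝ :=
  !![1, 0, 0; 0, 3/5, -4/5; 0, 4/5, 3/5]

/-- The inverse (transpose) of `tauRot`. -/
noncomputable def tauRotInv : Matrix (Fin 3) (Fin 3) ℝ :=
  !![1, 0, 0; 0, 3/5, 4/5; 0, -4/5, 3/5]

/-- Evaluation of an element of the free group on two generators (`true ↦ σ`,
`false ↦ τ`) as a product of rotation matrices, reading its reduced word. -/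
noncomputable def wordProd (w : FreeGroup Bool) : Matrix (Fin 3) (Fin 3) ℝ :=
  (w.toWord.map (fun p =>
    if p.1 then (if p.2 then sigmaRot else sigmaRotInv)
    else (if p.2 then tauRot else tauRotInv))).prod

open Matrix FreeGroup

noncomputable def letterRot (x : Bool × Bool) : Matrix (Fin 3) (Fin 3) ℝ :=
  if x.1 then (if x.2 then sigmaRot else sigmaRotInv) else (if x.2 then tauRot else tauRotInv)

def scaledLetter (x : Bool × Bool) : Matrix (Fin 3) (Fin 3) ℤ :=
  if x.1 then (if x.2 then !![3, -4, 0; 4, 3, 0; 0, 0, 5] else !![3, 4, 0; -4, 3, 0; 0, 0, 5])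
  else (if x.2 then !![5, 0, 0; 0, 3, -4; 0, 4, 3] else !![5, 0, 0; 0, 3, 4; 0, -4, 3])

lemma letterRot_eq_smul_scaledLetter (x : Bool × Bool) :
    letterRot x = (5 : ℝ)⁻¹ • (Int.castRingHom ℝ).mapMatrix (scaledLetter x) := by
  rcases x with ⟨_ | _, _ | _⟩ <;> ext i j <;> fin_cases i <;> fin_cases j <;>
    norm_num [letterRot, scaledLetter, sigmaRot, sigmaRotInv, tauRot, tauRotInv]

lemma prod_map_letterRot (L : List (Bool × Bool)) :
    (L.map letterRot).prod =
      ((5 : ℝ) ^ L.length)⁻¹ • (Int.castRingHom ℝ).mapMatrix (L.map scaledLetter).prod := by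
  induction L with
  | nil => simp
  | cons x L ih =>
    rw [List.map_cons, List.prod_cons, ih, letterRot_eq_smul_scaledLetter, smul_mul_smul,
      List.map_cons, List.prod_cons, RingHom.map_mul, List.length_cons, pow_succ', mul_inv]

def numerator (L : List (Bool × Bool)) : Fin 3 → ℤ :=
  (L.map scaledLetter).prod *ᵥ ![1, 0, 0]

lemma numerator_cons (x : Bool × Bool) (L : List (Bool × Bool)) :
    numerator (x :: L) = scaledLetter x *ᵥ numerator L := by
  simp only [numerator, List.map_cons, List.prod_cons, mulVec_mulVec]

lemma wordProd_mulVec (w : FreeGroup Bool) :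
    wordProd w *ᵥ ![1, 0, 0] =
      ((5 : ℝ) ^ w.toWord.length)⁻¹ • fun i => (numerator w.toWord i : ℝ) := by
  have hcast : (Int.castRingHom ℝ) ∘ ![(1 : ℤ), 0, 0] = ![1, 0, 0] := by
    ext i; fin_cases i <;> simp
  change (w.toWord.map letterRot).prod *ᵥ _ = _
  rw [prod_map_letterRot, smul_mulVec, ← hcast]
  congr 1
  ext i
  exact (RingHom.map_mulVec _ _ _ i).symm

/-- A column of `scaledLetter x` spanning its image modulo 5. -/
def residueDirection (x : Bool × Bool) : Fin 3 → ZMod 5 :=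
  if x.1 then (if x.2 then ![3, 4, 0] else ![3, -4, 0])
  else (if x.2 then ![0, 3, 4] else ![0, 3, -4])

lemma scaledLetter_mulVec_residueDirection {x y : Bool × Bool} (h : x.1 = y.1 → x.2 = y.2) :
    ∃ β : (ZMod 5)ˣ,
      (Int.castRingHom (ZMod 5)).mapMatrix (scaledLetter x) *ᵥ residueDirection y =
        β • residueDirection x := by
  rcases x with ⟨_ | _, _ | _⟩ <;> rcases y with ⟨_ | _, _ | _⟩ <;> revert h <;> decide

lemma numerator_cast_eq_smul_residueDirection (x : Bool × Bool) (L : List (Bool × Bool))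
    (s : Bool) (hred : IsReduced (x :: L)) (hlast : (x :: L).getLast? = some (true, s)) :
    ∃ α : (ZMod 5)ˣ, Int.castRingHom (ZMod 5) ∘ numerator (x :: L) = α • residueDirection x := by
  induction L generalizing x with
  | nil =>
    obtain rfl : x = (true, s) := by simpa using hlast
    refine ⟨1, funext fun i => ?_⟩
    cases s <;> fin_cases i <;> simp [numerator, scaledLetter, residueDirection]
  | cons y L ih =>
    rw [isReduced_cons_cons] at hred
    obtain ⟨α, hy⟩ := ih y hred.2 (by simpa using hlast)
    obtain ⟨β, hxy⟩ := scaledLetter_mulVec_residueDirection hred.1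
    refine ⟨β * α, ?_⟩
    calc Int.castRingHom (ZMod 5) ∘ numerator (x :: y :: L)
        = (Int.castRingHom (ZMod 5)).mapMatrix (scaledLetter x) *ᵥ
            (Int.castRingHom (ZMod 5) ∘ numerator (y :: L)) := by
          ext i; rw [numerator_cons]; exact RingHom.map_mulVec _ _ _ i
      _ = (β * α) • residueDirection x := by
          rw [hy, Units.smul_def, mulVec_smul, hxy, smul_comm, mul_smul]
          rfl

lemma not_five_dvd_numerator_one (x : Bool × Bool) (L : List (Bool × Bool)) (s : Bool)
    (hred : IsReduced (x :: L)) (hlast : (x :: L).getLast? = some (true, s)) :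
    ¬ (5 : ℤ) ∣ numerator (x :: L) 1 := by
  obtain ⟨α, hα⟩ := numerator_cast_eq_smul_residueDirection x L s hred hlast
  have hdir : residueDirection x 1 ≠ 0 := by rcases x with ⟨_ | _, _ | _⟩ <;> decide
  intro hdvd
  have hzero : (numerator (x :: L) 1 : ZMod 5) = 0 :=
    (ZMod.intCast_zmod_eq_zero_iff_dvd _ 5).mpr hdvd
  have hentry := congrFun hα 1
  simp only [Function.comp_apply, eq_intCast, hzero, Pi.smul_apply] at hentry
  exact hdir ((smul_eq_zero_iff_eq α).mp hentry.symm)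

theorem wordProd_mulVec_form_general (w : FreeGroup Bool)
    (hlast : ∃ s : Bool, w.toWord.getLast? = some (true, s)) :
    ∃ a b c : ℤ, ¬ (5 : ℤ) ∣ b ∧
      (wordProd w).mulVec ![1, 0, 0] =
        ![(a : ℝ) / 5 ^ w.toWord.length, (b : ℝ) / 5 ^ w.toWord.length,
          (c : ℝ) / 5 ^ w.toWord.length] := by
  obtain ⟨s, hs⟩ := hlast
  refine ⟨numerator w.toWord 0, numerator w.toWord 1, numerator w.toWord 2, ?_, ?_⟩
  · obtain ⟨x, L, hxL⟩ :=
      List.exists_cons_of_ne_nil (List.ne_nil_of_mem (List.mem_of_getLast? hs))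
    rw [hxL] at hs ⊢
    exact not_five_dvd_numerator_one x L s (hxL ▸ isReduced_toWord) hs
  · rw [wordProd_mulVec]
    ext i
    fin_cases i <;> simp [div_eq_inv_mul]

/-- Every nontrivial reduced word `ω` of length `n` in `σ^{±1}, τ^{±1}` whose rightmost
letter is `σ` or `σ⁻¹` sends `(1,0,0)` to a vector of the form `(a,b,c)/5ⁿ` with
`a, b, c ∈ ℤ` and `b` not divisible by `5`. -/
theorem wordProd_mulVec_form (w : FreeGroup Bool) (hw : w ≠ 1)
    (hlast : ∃ s : Bool, w.toWord.getLast? = some (true, s)) :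
    ∃ a b c : ℤ, ¬ (5 : ℤ) ∣ b ∧
      (wordProd w).mulVec ![1, 0, 0] =
        ![(a : ℝ) / 5 ^ w.toWord.length, (b : ℝ) / 5 ^ w.toWord.length,
          (c : ℝ) / 5 ^ w.toWord.length] :=
  wordProd_mulVec_form_general w hlast
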